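/- Let R be a commutative ring, G, π, φ as above, and let tr_n: M_n(R[G]) → R[π_{φ'}] be defined by tr_n(A) = Σ_i tr(a_ii), where tr is the twisted trace on R[G]. Then for matrices A ∈ M_{m×n}(R[G]) and B ∈ M_{n×m}(R[G]), tr_m(A·B) = tr_n(φ(B)·A), where φ is applied entrywise. -/

import Mathlib

open scoped Classical

/-- Twisted conjugacy relation on `π`: `a ∼ b` iff `b = φ(γ) a γ⁻¹` for some `γ ∈ G`. -/
def twRel {G : Type} [Group G] (π : Subgroup G) (φ : G →* G) (a b : ↥π) : Prop :=
  ∃ γ : G, (b : G) = φ γ * ↑a * γ⁻¹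

/-- The set of twisted conjugacy classes `π_{φ'}`. -/
def TwCl {G : Type} [Group G] (π : Subgroup G) (φ : G →* G) := Quot (twRel π φ)

/-- The twisted trace `tr : R[G] → R[π_{φ'}]`, sending `Σ r_g·g` to `Σ_{g ∈ π} r_g·[g]`. -/
noncomputable def twTr (R : Type) {G : Type} [CommRing R] [Group G] (π : Subgroup G)
    (φ : G →* G) (a : MonoidAlgebra R G) : TwCl π φ →₀ R :=
  Finsupp.sum a.coeff fun g r =>
    if h : g ∈ π then Finsupp.single (Quot.mk (twRel π φ) ⟨g, h⟩) r else 0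


/-- The twisted trace of a square matrix over `R[G]`: sum of twisted traces of the
diagonal entries. -/
noncomputable def twTrMat (R : Type) {G : Type} [CommRing R] [Group G] (π : Subgroup G)
    (φ : G →* G) {ι : Type} [Fintype ι] (A : Matrix ι ι (MonoidAlgebra R G)) :
    TwCl π φ →₀ R :=
  ∑ i, twTr R π φ (A i i)

/-!
By bilinearity it suffices to treat basis elements `g, h ∈ G`. Since `φ` is trivial on `G/π`,
`g h ∈ π ↔ φ(h) g ∈ π`, and then `φ(h) g = φ(h) (g h) h⁻¹` is twisted conjugate to `g h`.
The matrix identity follows by exchanging the two sums in the diagonal of the products.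
-/

section TwistedTrace

variable {R G : Type} [CommRing R] [Group G] {π : Subgroup G} {φ : G →* G}

lemma twTr_add (a b : MonoidAlgebra R G) :
    twTr R π φ (a + b) = twTr R π φ a + twTr R π φ b := by
  unfold twTr TwCl
  rw [MonoidAlgebra.coeff_add]
  apply Finsupp.sum_add_index' <;> intros <;> split_ifs <;> simp [Finsupp.single_add]

lemma twTr_sum {ι : Type} (s : Finset ι) (f : ι → MonoidAlgebra R G) :
    twTr R π φ (∑ i ∈ s, f i) = ∑ i ∈ s, twTr R π φ (f i) :=
  map_sum (AddMonoidHom.mk' (twTr R π φ) twTr_add) f s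

lemma twTr_single (g : G) (r : R) :
    twTr R π φ (MonoidAlgebra.single g r) =
      if h : g ∈ π then Finsupp.single (Quot.mk (twRel π φ) ⟨g, h⟩) r else 0 := by
  unfold twTr TwCl
  rw [MonoidAlgebra.coeff_single, Finsupp.sum_single_index]
  split_ifs <;> simp

lemma mul_mem_iff_map_mul_mem [π.Normal] (hquot : ∀ g : G, φ g * g⁻¹ ∈ π) (g h : G) :
    g * h ∈ π ↔ φ h * g ∈ π := by
  rw [Subgroup.Normal.mem_comm_iff inferInstance,
    ← Subgroup.mul_mem_cancel_left π (hquot h), mul_assoc, inv_mul_cancel_left]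

lemma twTr_mul_comm [π.Normal] (hquot : ∀ g : G, φ g * g⁻¹ ∈ π) (a b : MonoidAlgebra R G) :
    twTr R π φ (a * b) = twTr R π φ (MonoidAlgebra.mapDomainRingHom R φ b * a) := by
  induction a using MonoidAlgebra.induction_linear with
  | zero => rw [zero_mul, mul_zero]
  | add a a' ha ha' => rw [add_mul, mul_add, twTr_add, twTr_add, ha, ha']
  | single g r =>
    induction b using MonoidAlgebra.induction_linear with
    | zero => rw [mul_zero, map_zero, zero_mul]
    | add b b' hb hb' => rw [mul_add, map_add, add_mul, twTr_add, twTr_add, hb, hb']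
    | single h s =>
      rw [MonoidAlgebra.mapDomainRingHom_apply, MonoidAlgebra.mapDomain_single,
        MonoidAlgebra.single_mul_single, MonoidAlgebra.single_mul_single, twTr_single,
        twTr_single, mul_comm r s]
      by_cases hgh : g * h ∈ π
      · rw [dif_pos hgh, dif_pos ((mul_mem_iff_map_mul_mem hquot g h).mp hgh)]
        -- `φ h * g` is the `h`-twisted conjugate `φ h * (g * h) * h⁻¹` of `g * h`.
        exact congrArg (Finsupp.single · _) (Quot.sound ⟨h, by group⟩)
      · rw [dif_neg hgh, dif_neg (mt (mul_mem_iff_map_mul_mem hquot g h).mpr hgh)]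

lemma twTrMat_mul_comm [π.Normal] (hquot : ∀ g : G, φ g * g⁻¹ ∈ π) {ι κ : Type}
    [Fintype ι] [Fintype κ] (A : Matrix ι κ (MonoidAlgebra R G))
    (B : Matrix κ ι (MonoidAlgebra R G)) :
    twTrMat R π φ (A * B) =
      twTrMat R π φ (B.map (MonoidAlgebra.mapDomainRingHom R φ) * A) := by
  simp only [twTrMat, Matrix.mul_apply, Matrix.map_apply, twTr_sum]
  rw [Finset.sum_comm]
  exact Fintype.sum_congr _ _ fun j => Fintype.sum_congr _ _ fun i => twTr_mul_comm hquot _ _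

end TwistedTrace

theorem statement5_general (R G : Type) [CommRing R] [Group G] (π : Subgroup G) [π.Normal]
    (φ : G →* G) (hquot : ∀ g : G, φ g * g⁻¹ ∈ π) :
    ∀ (m n : ℕ) (A : Matrix (Fin m) (Fin n) (MonoidAlgebra R G))
      (B : Matrix (Fin n) (Fin m) (MonoidAlgebra R G)),
      twTrMat R π φ (A * B) =
        twTrMat R π φ (B.map ⇑(MonoidAlgebra.mapDomainRingHom R φ) * A) :=
  fun _ _ => twTrMat_mul_comm hquot

/-- `tr_m(A·B) = tr_n(φ(B)·A)` for rectangular matrices over `R[G]`, `φ` applied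
entrywise. -/
theorem statement5 (R G : Type) [CommRing R] [Group G] (π : Subgroup G) [π.Normal]
    (φ : G →* G) (hres : ∀ g ∈ π, φ g ∈ π) (hquot : ∀ g : G, φ g * g⁻¹ ∈ π) :
    ∀ (m n : ℕ) (A : Matrix (Fin m) (Fin n) (MonoidAlgebra R G))
      (B : Matrix (Fin n) (Fin m) (MonoidAlgebra R G)),
      twTrMat R π φ (A * B) =
        twTrMat R π φ (B.map ⇑(MonoidAlgebra.mapDomainRingHom R φ) * A) :=
  statement5_general R G π φ hquot
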